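/- For all integers r, s and all natural numbers n, the following identity holds: Σ_{i=0}^{n} V_{r+2i}·V_{s+2i} = a_{n+1}·V_{2n+r+s} + (n+1)·q^r·V_{s−r}. -/

import Mathlib

/-!
The solutions `f : ℤ → R` of `f (n + 2) = p * f (n + 1) - q * f n` are determined by `f 0` and
`f 1` (as `q` is a unit) and, since `q * q = 1`, are stable under `n ↦ f (n + m)` and under the
reflection `n ↦ q ^ |n| * f (m - n)`. Comparing values at `0` and `1` gives
`f m * V k = f (m + k) + q ^ |k| * f (m - k)` for every solution `f`. With `f = V` each summand
becomes `V (r + s + 4 i) + q ^ |r| * V (s - r)`; with `f = U`, together with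
`p * V m = U (m + 2) - U (m - 2)`, induction on `n` gives
`p * ∑ i ≤ n, V (t + 4 i) = U (2 n + 2) * V (t + 2 n)`, and `p` cancels against `p * a (n + 1)`.
-/

open Finset

theorem pow_natAbs_add_one_of_mul_self_eq_one {M : Type*} [CommMonoid M] {q : M}
    (hq : q * q = 1) (k : ℤ) : q ^ (k + 1).natAbs = q * q ^ k.natAbs := by
  rcases le_or_gt 0 k with hk | hk
  · rw [show (k + 1).natAbs = k.natAbs + 1 by omega, pow_succ, mul_comm]
  · rw [show k.natAbs = (k + 1).natAbs + 1 by omega, pow_succ, mul_left_comm, hq, mul_one]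

theorem pow_natAbs_add_two_of_mul_self_eq_one {M : Type*} [CommMonoid M] {q : M}
    (hq : q * q = 1) (k : ℤ) : q ^ (k + 2).natAbs = q ^ k.natAbs := by
  rw [show k + 2 = k + 1 + 1 by ring, pow_natAbs_add_one_of_mul_self_eq_one hq,
    pow_natAbs_add_one_of_mul_self_eq_one hq, ← mul_assoc, hq, one_mul]

theorem pow_natAbs_add_two_mul_of_mul_self_eq_one {M : Type*} [CommMonoid M] {q : M}
    (hq : q * q = 1) (k : ℤ) (i : ℕ) : q ^ (k + 2 * i).natAbs = q ^ k.natAbs := by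
  induction i with
  | zero => simp
  | succ i ih =>
    rw [Nat.cast_succ, mul_add_one, ← add_assoc, pow_natAbs_add_two_of_mul_self_eq_one hq, ih]

section LucasRec

variable {R : Type*} [CommRing R] {p q : R}

def IsLucasRec (p q : R) (f : ℤ → R) : Prop :=
  ∀ n, f (n + 2) = p * f (n + 1) - q * f n

namespace IsLucasRec

variable {f g : ℤ → R}

theorem add (hf : IsLucasRec p q f) (hg : IsLucasRec p q g) :
    IsLucasRec p q (fun n => f n + g n) := fun n => by
  simp only [hf n, hg n]; ring

theorem sub (hf : IsLucasRec p q f) (hg : IsLucasRec p q g) :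
    IsLucasRec p q (fun n => f n - g n) := fun n => by
  simp only [hf n, hg n]; ring

theorem const_mul (c : R) (hf : IsLucasRec p q f) : IsLucasRec p q (fun n => c * f n) :=
  fun n => by simp only [hf n]; ring

theorem comp_add (m : ℤ) (hf : IsLucasRec p q f) : IsLucasRec p q (fun n => f (n + m)) :=
  fun n => by simpa only [add_right_comm _ m] using hf (n + m)

theorem comp_sub (m : ℤ) (hf : IsLucasRec p q f) : IsLucasRec p q (fun n => f (n - m)) :=
  fun n => by simpa only [sub_add_eq_add_sub] using hf (n - m)

theorem mul_eq_sub (hf : IsLucasRec p q f) (n : ℤ) : q * f n = p * f (n + 1) - f (n + 2) := by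
  rw [hf n]; ring

theorem pow_natAbs_mul_comp_sub (hq : q * q = 1) (m : ℤ) (hf : IsLucasRec p q f) :
    IsLucasRec p q (fun n => q ^ n.natAbs * f (m - n)) := fun n => by
  have hback := hf.mul_eq_sub (m - n - 2)
  rw [show m - n - 2 + 1 = m - (n + 1) by ring, show m - n - 2 + 2 = m - n by ring] at hback
  simp only [pow_natAbs_add_two_of_mul_self_eq_one hq, pow_natAbs_add_one_of_mul_self_eq_one hq n,
    show m - (n + 2) = m - n - 2 by ring]
  linear_combination (q * q ^ n.natAbs) * hback - q ^ n.natAbs * f (m - n - 2) * hq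

theorem ext (hq : IsUnit q) (hf : IsLucasRec p q f) (hg : IsLucasRec p q g)
    (h0 : f 0 = g 0) (h1 : f 1 = g 1) : f = g := by
  suffices h : ∀ n : ℤ, f n = g n ∧ f (n + 1) = g (n + 1) from funext fun n => (h n).1
  intro n
  induction n using Int.induction_on with
  | zero => exact ⟨h0, h1⟩
  | succ k ih => exact ⟨ih.2, by rw [add_assoc, one_add_one_eq_two, hf, hg, ih.1, ih.2]⟩
  | pred k ih =>
    have e1 : -(k : ℤ) - 1 + 1 = -k := by ring
    have e2 : -(k : ℤ) - 1 + 2 = -k + 1 := by ring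
    refine ⟨hq.mul_left_cancel ?_, by rw [e1]; exact ih.1⟩
    rw [hf.mul_eq_sub, hg.mul_eq_sub, e1, e2, ih.1, ih.2]

theorem mul_lucas (hq : q * q = 1) (hf : IsLucasRec p q f) {V : ℤ → R}
    (hV : IsLucasRec p q V) (hV0 : V 0 = 2) (hV1 : V 1 = p) (m k : ℤ) :
    f m * V k = f (m + k) + q ^ k.natAbs * f (m - k) := by
  have h := ext (IsUnit.of_mul_eq_one q hq) (hV.const_mul (f m))
    ((hf.comp_add m).add (hf.pow_natAbs_mul_comp_sub hq m))
    (by simp only [hV0, zero_add, sub_zero, Int.natAbs_zero, pow_zero]; ring)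
    (by
      simp only [hV1, Int.natAbs_one, pow_one]
      linear_combination (norm := ring_nf) -hf (m - 1))
  simpa only [add_comm] using congrFun h k

end IsLucasRec

variable {U V : ℤ → R}

theorem mul_lucas_eq_sub (hq : q * q = 1)
    (hU : IsLucasRec p q U) (hU0 : U 0 = 0) (hU1 : U 1 = 1)
    (hV : IsLucasRec p q V) (hV0 : V 0 = 2) (hV1 : V 1 = p) (m : ℤ) :
    p * V m = U (m + 2) - U (m - 2) := by
  have hU2 : U 2 = p := by simpa [hU0, hU1] using hU 0
  have hU3 : U 3 = p * p - q := by simpa [hU1, hU2] using hU 1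
  have hUm1 : U (-1) = -q := by
    have h := hU (-1)
    norm_num [hU0, hU1] at h
    linear_combination q * h - U (-1) * hq
  have hUm2 : U (-2) = -p := by
    have h := hU (-2)
    norm_num [hU0, hUm1] at h
    linear_combination q * h - (U (-2) + p) * hq
  have h := IsLucasRec.ext (IsUnit.of_mul_eq_one q hq) (hV.const_mul p)
    ((hU.comp_add 2).sub (hU.comp_sub 2))
    (by norm_num [hV0, hU2, hUm2]; ring)
    (by norm_num [hV1, hU3, hUm1])
  exact congrFun h m

theorem mul_sum_lucas (hq : q * q = 1)
    (hU : IsLucasRec p q U) (hU0 : U 0 = 0) (hU1 : U 1 = 1)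
    (hV : IsLucasRec p q V) (hV0 : V 0 = 2) (hV1 : V 1 = p) (t : ℤ) (N : ℕ) :
    p * ∑ i ∈ range (N + 1), V (t + 4 * i) = U (2 * N + 2) * V (t + 2 * N) := by
  induction N with
  | zero =>
    have hU2 : U 2 = p := by simpa [hU0, hU1] using hU 0
    simp [hU2]
  | succ N ih =>
    rw [sum_range_succ, mul_add, ih]
    -- Both products have the tail `q ^ |t + 2 N| * U (2 - t)`; their heads differ by
    -- `U (t + 4 N + 6) - U (t + 4 N + 2) = p * V (t + 4 N + 4)`.
    have hprev := hU.mul_lucas hq hV hV0 hV1 (2 * N + 2) (t + 2 * N)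
    have hnext := hU.mul_lucas hq hV hV0 hV1 (2 * N + 4) (t + 2 * N + 2)
    have hdiff := mul_lucas_eq_sub hq hU hU0 hU1 hV hV0 hV1 (t + 4 * N + 4)
    have hpow := pow_natAbs_add_two_of_mul_self_eq_one hq (t + 2 * N)
    push_cast
    linear_combination (norm := ring_nf) hprev - hnext + hdiff - U (2 - t) * hpow

end LucasRec

theorem stmt_7_general (p q : ℤ) (hp : p ≠ 0) (hq : q = 1 ∨ q = -1)
    (U V : ℤ → ℤ)
    (hU0 : U 0 = 0) (hU1 : U 1 = 1)
    (hUrec : ∀ n : ℤ, U n = p * U (n - 1) - q * U (n - 2))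
    (hV0 : V 0 = 2) (hV1 : V 1 = p)
    (hVrec : ∀ n : ℤ, V n = p * V (n - 1) - q * V (n - 2))
    (a : ℤ → ℤ) (ha : ∀ n : ℤ, p * a n = U (2 * n))
    (r s : ℤ) (n : ℕ) :
    (∑ i ∈ Finset.range (n + 1), V (r + 2 * i) * V (s + 2 * i)) =
      a ((n : ℤ) + 1) * V (2 * n + r + s) + ((n : ℤ) + 1) * q ^ r.natAbs * V (s - r) := by
  have hq2 : q * q = 1 := by rcases hq with rfl | rfl <;> norm_num
  have hU : IsLucasRec p q U := fun m => by rw [hUrec (m + 2)]; ring_nf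
  have hV : IsLucasRec p q V := fun m => by rw [hVrec (m + 2)]; ring_nf
  have hsummand (i : ℕ) :
      V (r + 2 * i) * V (s + 2 * i) = V (r + s + 4 * i) + q ^ r.natAbs * V (s - r) := by
    rw [mul_comm, hV.mul_lucas hq2 hV hV0 hV1, pow_natAbs_add_two_mul_of_mul_self_eq_one hq2]
    ring_nf
  have hsum : ∑ i ∈ range (n + 1), V (r + s + 4 * i) = a (n + 1) * V (2 * n + r + s) := by
    refine mul_left_cancel₀ hp ?_
    rw [mul_sum_lucas hq2 hU hU0 hU1 hV hV0 hV1, ← mul_assoc, ha]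
    ring_nf
  rw [sum_congr rfl fun i _ => hsummand i, sum_add_distrib, hsum, sum_const, card_range,
    nsmul_eq_mul]
  push_cast
  ring

theorem stmt_7 (p q : ℤ) (hp : p ≠ 0) (hq : q = 1 ∨ q = -1)
    (hΔ : p ^ 2 - 4 * q ≠ 0)
    (U V : ℤ → ℤ)
    (hU0 : U 0 = 0) (hU1 : U 1 = 1)
    (hUrec : ∀ n : ℤ, U n = p * U (n - 1) - q * U (n - 2))
    (hV0 : V 0 = 2) (hV1 : V 1 = p)
    (hVrec : ∀ n : ℤ, V n = p * V (n - 1) - q * V (n - 2))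
    (a : ℤ → ℤ) (ha : ∀ n : ℤ, p * a n = U (2 * n))
    (r s : ℤ) (n : ℕ) :
    (∑ i ∈ Finset.range (n + 1), V (r + 2 * i) * V (s + 2 * i)) =
      a ((n : ℤ) + 1) * V (2 * n + r + s) + ((n : ℤ) + 1) * q ^ r.natAbs * V (s - r) :=
  stmt_7_general p q hp hq U V hU0 hU1 hUrec hV0 hV1 hVrec a ha r s n
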